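/- Let X be a finite homogeneous quandle, and let A, B be finite sets of colorings (functions to X) of two graphs, each with a distinguished vertex, both invariant under post-composition by quandle automorphisms. Then the set of pairs (f, g) ∈ A × B with f(v_A) = g(v_B) has cardinality |A|·|B|/|X|. -/

import Mathlib

/-!
Sorting pairs by the common colour `x` of the two distinguished vertices, the count is
`∑ x, a x * b x`, where `a x` (resp. `b x`) is the number of colourings in `A` (resp. `B`)
sending the distinguished vertex to `x`. Post-composition with an automorphism carrying `x`
to `y` injects the `x`-fibre into the `y`-fibre, so by homogeneity all fibres of `A` have
the same size `|A| / |X|`, and likewise for `B`.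
-/

open Finset Function

theorem Finset.card_filter_product_eq_sum {α β X : Type*} [Fintype X] [DecidableEq X]
    (s : Finset α) (t : Finset β) (φ : α → X) (ψ : β → X) :
    ((s ×ˢ t).filter (fun p => φ p.1 = ψ p.2)).card
      = ∑ x, (s.filter (φ · = x)).card * (t.filter (ψ · = x)).card := by
  rw [card_eq_sum_card_fiberwise (f := fun p => φ p.1) (t := univ) fun _ _ => mem_univ _]
  refine sum_congr rfl fun x _ => ?_
  rw [filter_filter, ← card_product]
  congr 1
  ext ⟨a, b⟩
  simp only [mem_filter, mem_product]
  constructor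
  · rintro ⟨⟨ha, hb⟩, hab, rfl⟩
    exact ⟨⟨ha, rfl⟩, hb, hab.symm⟩
  · rintro ⟨⟨ha, rfl⟩, hb, hba⟩
    exact ⟨⟨ha, hb⟩, hba.symm, rfl⟩

section Colorings

variable {V X : Type*} [DecidableEq X] (A : Finset (V → X)) (v : V)

theorem card_filter_apply_le_of_comp_mem {h : X → X} (hinj : Injective h)
    (hA : ∀ f ∈ A, h ∘ f ∈ A) (x : X) :
    (A.filter (· v = x)).card ≤ (A.filter (· v = h x)).card := by
  refine card_le_card_of_injOn (h ∘ ·) (fun f hf => ?_) fun f _ g _ hfg => ?_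
  · simp only [mem_coe, mem_filter] at hf ⊢
    exact ⟨hA f hf.1, by simp [hf.2]⟩
  · exact funext fun w => hinj (congrFun hfg w)

variable {A} in
theorem card_filter_apply_eq_of_isPretransitive (S : Set (X → X)) (hS : ∀ h ∈ S, Injective h)
    (htrans : ∀ x y, ∃ h ∈ S, h x = y) (hA : ∀ h ∈ S, ∀ f ∈ A, h ∘ f ∈ A) (x y : X) :
    (A.filter (· v = x)).card = (A.filter (· v = y)).card := by
  have fiber_le : ∀ x y : X, (A.filter (· v = x)).card ≤ (A.filter (· v = y)).card := by
    intro x y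
    obtain ⟨h, hh, rfl⟩ := htrans x y
    exact card_filter_apply_le_of_comp_mem A v (hS h hh) (hA h hh) x
  exact (fiber_le x y).antisymm (fiber_le y x)

variable {A} in
theorem card_eq_card_mul_card_filter_apply [Fintype X] (S : Set (X → X))
    (hS : ∀ h ∈ S, Injective h) (htrans : ∀ x y, ∃ h ∈ S, h x = y)
    (hA : ∀ h ∈ S, ∀ f ∈ A, h ∘ f ∈ A) (x : X) :
    A.card = Fintype.card X * (A.filter (· v = x)).card := by
  rw [card_eq_sum_card_fiberwise (f := (· v)) (t := univ) fun _ _ => mem_univ _,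
    sum_congr rfl fun y _ => card_filter_apply_eq_of_isPretransitive v S hS htrans hA y x,
    sum_const, card_univ, smul_eq_mul]

end Colorings

theorem stmt_6_general {X SA SB : Type*} [Fintype X] [DecidableEq X]
    (op : X → X → X)
    (homog : ∀ x y : X, ∃ h : X → X, Function.Bijective h ∧
      (∀ a b, h (op a b) = op (h a) (h b)) ∧ h x = y)
    (vA : SA) (vB : SB) (A : Finset (SA → X)) (B : Finset (SB → X))
    (invA : ∀ h : X → X, Function.Bijective h →
      (∀ a b, h (op a b) = op (h a) (h b)) → ∀ f ∈ A, h ∘ f ∈ A)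
    (invB : ∀ h : X → X, Function.Bijective h →
      (∀ a b, h (op a b) = op (h a) (h b)) → ∀ g ∈ B, h ∘ g ∈ B) :
    ((A ×ˢ B).filter (fun p => p.1 vA = p.2 vB)).card
      = A.card * B.card / Fintype.card X := by
  let Aut : Set (X → X) := {h | Bijective h ∧ ∀ a b, h (op a b) = op (h a) (h b)}
  have hinj : ∀ h ∈ Aut, Injective h := fun h hh => hh.1.1
  have htrans : ∀ x y, ∃ h ∈ Aut, h x = y := fun x y =>
    let ⟨h, hbij, hhom, hxy⟩ := homog x y
    ⟨h, ⟨hbij, hhom⟩, hxy⟩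
  have hA : ∀ h ∈ Aut, ∀ f ∈ A, h ∘ f ∈ A := fun h hh => invA h hh.1 hh.2
  have hB : ∀ h ∈ Aut, ∀ g ∈ B, h ∘ g ∈ B := fun h hh => invB h hh.1 hh.2
  rw [card_filter_product_eq_sum A B (· vA) (· vB)]
  obtain _ | ⟨⟨x₀⟩⟩ := isEmpty_or_nonempty X
  · simp
  rw [card_eq_card_mul_card_filter_apply vA Aut hinj htrans hA x₀,
    card_eq_card_mul_card_filter_apply vB Aut hinj htrans hB x₀,
    sum_congr rfl fun x _ => by
      rw [card_filter_apply_eq_of_isPretransitive vA Aut hinj htrans hA x x₀,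
        card_filter_apply_eq_of_isPretransitive vB Aut hinj htrans hB x x₀],
    sum_const, card_univ, smul_eq_mul, mul_mul_mul_comm, mul_assoc,
    Nat.mul_div_cancel_left _ (Fintype.card_pos_iff.mpr ⟨x₀⟩)]

/-- For a finite homogeneous quandle `X` and two finite automorphism-invariant
sets of colorings `A`, `B` with distinguished vertices `vA`, `vB`, the number of
pairs `(f, g)` with `f vA = g vB` is `|A|·|B| / |X|`. -/
theorem stmt_6 {X SA SB : Type*} [Fintype X] [DecidableEq X]
    [Fintype SA] [DecidableEq SA] [Fintype SB] [DecidableEq SB]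
    (op : X → X → X)
    (idem : ∀ x, op x x = x)
    (inv : ∀ y, Function.Bijective (fun x => op x y))
    (distrib : ∀ x y z, op (op x y) z = op (op x z) (op y z))
    (homog : ∀ x y : X, ∃ h : X → X, Function.Bijective h ∧
      (∀ a b, h (op a b) = op (h a) (h b)) ∧ h x = y)
    (vA : SA) (vB : SB) (A : Finset (SA → X)) (B : Finset (SB → X))
    (invA : ∀ h : X → X, Function.Bijective h →
      (∀ a b, h (op a b) = op (h a) (h b)) → ∀ f ∈ A, h ∘ f ∈ A)
    (invB : ∀ h : X → X, Function.Bijective h →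
      (∀ a b, h (op a b) = op (h a) (h b)) → ∀ g ∈ B, h ∘ g ∈ B) :
    ((A ×ˢ B).filter (fun p => p.1 vA = p.2 vB)).card
      = A.card * B.card / Fintype.card X :=
  stmt_6_general op homog vA vB A B invA invB
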